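/- For every n ≥ 1 and every polynomial p ∈ P_n one has ‖Dp‖_{n+1} ≤ n·‖p‖_n. Moreover, if p ∈ P_n is an odd polynomial, then ‖p‖_n ≤ ‖Dp‖_{n+1}. -/

import Mathlib

/-!
Since `D τ_k = k τ_{k+1}`, the `τ`-coordinates of `Dp` are those of `p` multiplied by `k` and shifted
by one, so `‖Dp‖_{n+1} = Σ_k k |a_k| (π/2)^{n-k}` while `‖p‖_n = Σ_k |a_k| (π/2)^{n-k}`. The first
inequality is `k ≤ n`. For the second it suffices that `a_0 = 0`: every `τ_k` with `k ≥ 2` has the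
factor `1 - u²`, so `p(1) + p(-1) = 2 a_0`, which vanishes when `p` is odd.
-/

open Polynomial Classical

/-- The operator `D` on polynomials: `(Dp)(u) = (1 - u²)·p′(u)`. -/
noncomputable def Dop (p : Polynomial ℂ) : Polynomial ℂ := (1 - X ^ 2) * derivative p

/-- The polynomials τ_n: τ₀ = 1, τ₁ = X, τ_{n+1} = (1/n)·D τ_n for n ≥ 1. -/
noncomputable def tau : ℕ → Polynomial ℂ
  | 0 => 1
  | 1 => X
  | n + 2 => (((n + 1 : ℕ) : ℂ))⁻¹ • Dop (tau (n + 1))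

/-- The norm `‖p‖_n` of a polynomial `p ∈ P_n`: writing `p = Σ_{k=0}^n a_k τ_k`
(the `τ_k` form a basis of `P_n`, so the `a_k` are unique), set
`‖p‖_n = Σ_{k=0}^n |a_k|·(π/2)^{n-k}`. -/
noncomputable def tauNorm (n : ℕ) (p : Polynomial ℂ) : ℝ :=
  if h : ∃ a : ℕ → ℂ, p = ∑ k ∈ Finset.range (n + 1), a k • tau k then
    ∑ k ∈ Finset.range (n + 1), ‖h.choose k‖ * (Real.pi / 2) ^ (n - k)
  else 0

lemma Dop_sum_smul (s : Finset ℕ) (a : ℕ → ℂ) (f : ℕ → Polynomial ℂ) :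
    Dop (∑ k ∈ s, a k • f k) = ∑ k ∈ s, a k • Dop (f k) := by
  simp only [Dop, derivative_sum, derivative_smul, Finset.mul_sum, mul_smul_comm]

lemma eval_Dop_eq_zero_of_sq_eq_one (p : Polynomial ℂ) {x : ℂ} (hx : x ^ 2 = 1) :
    (Dop p).eval x = 0 := by
  simp [Dop, hx]

lemma natDegree_Dop_le {p : Polynomial ℂ} {m : ℕ} (hp : p.natDegree ≤ m + 1) :
    (Dop p).natDegree ≤ m + 2 := by
  have h₁ : (1 - X ^ 2 : Polynomial ℂ).natDegree ≤ 2 := by compute_degree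
  have h₂ := natDegree_derivative_le p
  exact natDegree_mul_le.trans (by omega)

lemma coeff_Dop_succ {p : Polynomial ℂ} {m : ℕ} (hp : p.natDegree ≤ m + 1) :
    (Dop p).coeff (m + 2) = -((m + 1 : ℕ) : ℂ) * p.coeff (m + 1) := by
  have hd : (derivative p).coeff (m + 2) = 0 :=
    coeff_eq_zero_of_natDegree_lt ((natDegree_derivative_le p).trans_lt (by omega))
  rw [Dop, sub_mul, one_mul, coeff_sub, hd, coeff_X_pow_mul', if_pos (by omega),
    Nat.add_sub_cancel, coeff_derivative]
  push_cast
  ring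

lemma tau_add_two (n : ℕ) : tau (n + 2) = ((n + 1 : ℕ) : ℂ)⁻¹ • Dop (tau (n + 1)) := rfl

lemma Dop_tau (k : ℕ) : Dop (tau k) = (k : ℂ) • tau (k + 1) := by
  cases k with
  | zero => simp [tau, Dop]
  | succ m =>
    rw [tau_add_two, smul_smul, mul_inv_cancel₀ (Nat.cast_ne_zero.mpr m.succ_ne_zero), one_smul]

lemma natDegree_tau_le (n : ℕ) : (tau n).natDegree ≤ n := by
  induction n using Nat.strong_induction_on with
  | _ n ih =>
    match n with
    | 0 => simp [tau]
    | 1 => simp [tau]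
    | m + 2 => exact (natDegree_smul_le _ _).trans (natDegree_Dop_le (ih (m + 1) (by omega)))

lemma coeff_tau_self_ne_zero (n : ℕ) : (tau n).coeff n ≠ 0 := by
  induction n using Nat.strong_induction_on with
  | _ n ih =>
    match n with
    | 0 => simp [tau]
    | 1 => simp [tau]
    | m + 2 =>
      rw [tau_add_two, coeff_smul, coeff_Dop_succ (natDegree_tau_le _), smul_eq_mul]
      have hm : ((m + 1 : ℕ) : ℂ) ≠ 0 := Nat.cast_ne_zero.mpr m.succ_ne_zero
      exact mul_ne_zero (inv_ne_zero hm) (mul_ne_zero (neg_ne_zero.mpr hm) (ih _ (by omega)))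

lemma degree_tau (n : ℕ) : (tau n).degree = n :=
  degree_eq_of_le_of_coeff_ne_zero
    (degree_le_natDegree.trans (by exact_mod_cast natDegree_tau_le n)) (coeff_tau_self_ne_zero n)

noncomputable def tauSequence : Polynomial.Sequence ℂ := ⟨tau, degree_tau⟩

lemma exists_tau_expansion {n : ℕ} {p : Polynomial ℂ} (hp : p.degree ≤ n) :
    ∃ a : ℕ → ℂ, p = ∑ k ∈ Finset.range (n + 1), a k • tau k := by
  have hspan := tauSequence.span_degreeLT (m := n + 1) fun i _ ↦
    (leadingCoeff_ne_zero.mpr (tauSequence.ne_zero i)).isUnit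
  have hmem : p ∈ Submodule.span ℂ (tauSequence '' ↑(Finset.range (n + 1))) := by
    rw [Finset.coe_range, hspan, mem_degreeLT]
    exact hp.trans_lt (by exact_mod_cast Nat.lt_succ_self n)
  obtain ⟨a, ha⟩ := (Submodule.mem_span_image_finset_iff_exists_fun' ℂ).mp hmem
  exact ⟨a, ha.symm⟩

lemma tau_expansion_unique {m : ℕ} {a b : ℕ → ℂ}
    (h : ∑ k ∈ Finset.range m, a k • tau k = ∑ k ∈ Finset.range m, b k • tau k) {k : ℕ}
    (hk : k < m) : a k = b k :=
  linearIndependent_iff'ₛ.mp tauSequence.linearIndependent _ a b h k (Finset.mem_range.mpr hk)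

lemma tauNorm_tau_expansion (n : ℕ) (a : ℕ → ℂ) :
    tauNorm n (∑ k ∈ Finset.range (n + 1), a k • tau k) =
      ∑ k ∈ Finset.range (n + 1), ‖a k‖ * (Real.pi / 2) ^ (n - k) := by
  have h : ∃ b : ℕ → ℂ, ∑ k ∈ Finset.range (n + 1), a k • tau k =
      ∑ k ∈ Finset.range (n + 1), b k • tau k := ⟨a, rfl⟩
  rw [tauNorm, dif_pos h]
  refine Finset.sum_congr rfl fun k hk ↦ ?_
  rw [tau_expansion_unique h.choose_spec.symm (Finset.mem_range.mp hk)]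

-- The coefficient of `τ_0` is `0 * a 0` because `0 - 1 = 0` in `ℕ`.
lemma Dop_tau_expansion (n : ℕ) (a : ℕ → ℂ) :
    Dop (∑ k ∈ Finset.range (n + 1), a k • tau k) =
      ∑ j ∈ Finset.range (n + 2), (((j - 1 : ℕ) : ℂ) * a (j - 1)) • tau j := by
  rw [Dop_sum_smul, Finset.sum_range_succ' _ (n + 1)]
  simp [Dop_tau, smul_smul, mul_comm]

lemma tauNorm_Dop_tau_expansion (n : ℕ) (a : ℕ → ℂ) :
    tauNorm (n + 1) (Dop (∑ k ∈ Finset.range (n + 1), a k • tau k)) =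
      ∑ k ∈ Finset.range (n + 1), k * (‖a k‖ * (Real.pi / 2) ^ (n - k)) := by
  rw [Dop_tau_expansion, tauNorm_tau_expansion, Finset.sum_range_succ' _ (n + 1)]
  simp [mul_assoc]

lemma eval_one_add_eval_neg_one_tau (k : ℕ) :
    (tau k).eval 1 + (tau k).eval (-1) = if k = 0 then 2 else 0 := by
  match k with
  | 0 => norm_num [tau]
  | 1 => simp [tau]
  | m + 2 => simp [tau_add_two, eval_Dop_eq_zero_of_sq_eq_one]

lemma eval_one_add_eval_neg_one_tau_expansion (n : ℕ) (a : ℕ → ℂ) :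
    (∑ k ∈ Finset.range (n + 1), a k • tau k).eval 1 +
      (∑ k ∈ Finset.range (n + 1), a k • tau k).eval (-1) = 2 * a 0 := by
  simp only [eval_finsetSum, eval_smul, smul_eq_mul, ← Finset.sum_add_distrib, ← mul_add,
    eval_one_add_eval_neg_one_tau]
  simp [mul_comm]

theorem stmt_1_general (n : ℕ) (p : Polynomial ℂ) (hp : p.degree ≤ (n : WithBot ℕ)) :
    tauNorm (n + 1) (Dop p) ≤ (n : ℝ) * tauNorm n p ∧
    ((∀ x : ℂ, p.eval (-x) = -p.eval x) → tauNorm n p ≤ tauNorm (n + 1) (Dop p)) := by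
  obtain ⟨a, rfl⟩ := exists_tau_expansion hp
  rw [tauNorm_Dop_tau_expansion, tauNorm_tau_expansion]
  refine ⟨?_, fun hodd ↦ ?_⟩
  · rw [Finset.mul_sum]
    refine Finset.sum_le_sum fun k hk ↦ ?_
    have hkn : (k : ℝ) ≤ n := by exact_mod_cast Finset.mem_range_succ_iff.mp hk
    gcongr
  · have ha₀ : a 0 = 0 := by
      have h := eval_one_add_eval_neg_one_tau_expansion n a
      rw [hodd 1, add_neg_cancel] at h
      simpa using h.symm
    refine Finset.sum_le_sum fun k _ ↦ ?_
    cases k with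
    | zero => simp [ha₀]
    | succ k => exact le_mul_of_one_le_left (by positivity) (by simp)

theorem stmt_1 (n : ℕ) (hn : 1 ≤ n) (p : Polynomial ℂ) (hp : p.degree ≤ (n : WithBot ℕ)) :
    tauNorm (n + 1) (Dop p) ≤ (n : ℝ) * tauNorm n p ∧
    ((∀ x : ℂ, p.eval (-x) = -p.eval x) → tauNorm n p ≤ tauNorm (n + 1) (Dop p)) :=
  stmt_1_general n p hp
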